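/- Let E, H₁, H₂ be complex Hilbert spaces, let A ∈ B(E) be self-adjoint and invertible, and let B₁ ∈ B(H₁, E), C₁ ∈ B(E, H₁), C₂ ∈ B(E, H₂), D₁ ∈ B(H₁), D₂ ∈ B(H₂, H₁), D₃ ∈ B(H₂) satisfy C₁ A⁻² C₁* D₂ = D₂. Set B₂ := A⁻¹ C₁* D₂ and define operators on E ⊕ H₁ ⊕ H₂ by U(e, h₁, h₂) = (B₁ h₁, C₁ e + D₁ h₁ + D₂ h₂, C₂ e + D₃ h₂), Ũ₁(e, h₁, h₂) = (B₁ h₁, C₁ A⁻¹ e + D₁ h₁, h₂), and Ũ₂(e, h₁, h₂) = (A e + B₂ h₂, h₁, C₂ e + D₃ h₂). Then Ũ₁ ∘ Ũ₂ = U. -/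

import Mathlib

open ContinuousLinearMap

/-- The element `(e, h₁, h₂)` of the Hilbert-space direct sum `E ⊕ H₁ ⊕ H₂`,
modelled as `WithLp 2 (E × WithLp 2 (H₁ × H₂))`. -/
noncomputable def mk3 {E H₁ H₂ : Type*} (e : E) (h₁ : H₁) (h₂ : H₂) :
    WithLp 2 (E × WithLp 2 (H₁ × H₂)) :=
  (WithLp.equiv 2 _).symm (e, (WithLp.equiv 2 (H₁ × H₂)).symm (h₁, h₂))

/-- Let `A ∈ B(E)` be self-adjoint and invertible (with inverse `A'`)
and suppose `C₁ A⁻² C₁* D₂ = D₂`.  With `B₂ := A⁻¹ C₁* D₂`, the operators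
`U(e, h₁, h₂) = (B₁ h₁, C₁ e + D₁ h₁ + D₂ h₂, C₂ e + D₃ h₂)`,
`Ũ₁(e, h₁, h₂) = (B₁ h₁, C₁ A⁻¹ e + D₁ h₁, h₂)` and
`Ũ₂(e, h₁, h₂) = (A e + B₂ h₂, h₁, C₂ e + D₃ h₂)` satisfy `Ũ₁ ∘ Ũ₂ = U`. -/
theorem statement6
    {E H₁ H₂ : Type*}
    [NormedAddCommGroup E] [InnerProductSpace ℂ E] [CompleteSpace E]
    [NormedAddCommGroup H₁] [InnerProductSpace ℂ H₁] [CompleteSpace H₁]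
    [NormedAddCommGroup H₂] [InnerProductSpace ℂ H₂] [CompleteSpace H₂]
    (A A' : E →L[ℂ] E) (hA : IsSelfAdjoint A)
    (hAA' : A ∘L A' = ContinuousLinearMap.id ℂ E)
    (hA'A : A' ∘L A = ContinuousLinearMap.id ℂ E)
    (B₁ : H₁ →L[ℂ] E) (C₁ : E →L[ℂ] H₁) (C₂ : E →L[ℂ] H₂)
    (D₁ : H₁ →L[ℂ] H₁) (D₂ : H₂ →L[ℂ] H₁) (D₃ : H₂ →L[ℂ] H₂)
    (hD₂ : C₁ ∘L (A' ∘L A') ∘L adjoint C₁ ∘L D₂ = D₂)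
    (B₂ : H₂ →L[ℂ] E) (hB₂ : B₂ = A' ∘L adjoint C₁ ∘L D₂)
    (U U₁ U₂ : WithLp 2 (E × WithLp 2 (H₁ × H₂)) →L[ℂ] WithLp 2 (E × WithLp 2 (H₁ × H₂)))
    (hU : ∀ (e : E) (h₁ : H₁) (h₂ : H₂),
      U (mk3 e h₁ h₂) = mk3 (B₁ h₁) (C₁ e + D₁ h₁ + D₂ h₂) (C₂ e + D₃ h₂))
    (hU₁ : ∀ (e : E) (h₁ : H₁) (h₂ : H₂),
      U₁ (mk3 e h₁ h₂) = mk3 (B₁ h₁) (C₁ (A' e) + D₁ h₁) h₂)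
    (hU₂ : ∀ (e : E) (h₁ : H₁) (h₂ : H₂),
      U₂ (mk3 e h₁ h₂) = mk3 (A e + B₂ h₂) h₁ (C₂ e + D₃ h₂)) :
    U₁ ∘L U₂ = U := by
  ext x
  obtain ⟨⟨e, ⟨⟨h₁, h₂⟩⟩⟩⟩ := x
  have hx : (WithLp.toLp 2 (e, WithLp.toLp 2 (h₁, h₂)) : WithLp 2 (E × WithLp 2 (H₁ × H₂))) = mk3 e h₁ h₂ := rfl
  have key : C₁ (A' (A e + B₂ h₂)) + D₁ h₁ = C₁ e + D₁ h₁ + D₂ h₂ := by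
    have h1 : A' (A e) = e := congrFun (congrArg DFunLike.coe hA'A) e
    have h2 : C₁ (A' (B₂ h₂)) = D₂ h₂ := by
      have := congrFun (congrArg DFunLike.coe hD₂) h₂
      simp only [hB₂, ContinuousLinearMap.comp_apply] at this ⊢
      exact this
    rw [map_add, map_add, h1, h2]
    abel
  simp only [ContinuousLinearMap.comp_apply, hx, hU₂, hU₁, hU, key]
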